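/- Let F be a field of characteristic 2, let φ and ψ be nonsingular quadratic forms over F, and let c₁,…,c_s ∈ F be such that φ ⊥ ⟨c₁,…,c_s⟩ ≅ ψ ⊥ ⟨c₁,…,c_s⟩. Then for any nonsingular completion ρ of ⟨c₁,…,c_s⟩, there exists a nonsingular completion ρ' of ⟨c₁,…,c_s⟩ such that φ ⊥ ρ ≅ ψ ⊥ ρ'. -/

import Mathlib

open QuadraticMap MvPolynomial
open scoped TensorProduct

set_option synthInstance.maxHeartbeats 1000000
set_option maxHeartbeats 1000000


section Defs

variable {K : Type} [CommRing K]

/-- The binary quadratic form `[a,b] : (x,y) ↦ a·x² + x·y + b·y²`. -/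
noncomputable def binQF (a b : K) : QuadraticForm K (Fin 2 → K) :=
  (Matrix.of ![![a, 1], ![0, b]]).toQuadraticMap'

/-- The diagonal (totally singular) quadratic form `⟨c₁, …, c_s⟩`. -/
noncomputable def diagQF {s : ℕ} (c : Fin s → K) : QuadraticForm K (Fin s → K) :=
  QuadraticMap.weightedSumSquares K c

/-- The orthogonal sum `[a₁,b₁] ⊥ ⋯ ⊥ [a_r,b_r]` of binary forms. -/
noncomputable def binsQF {r : ℕ} (a b : Fin r → K) : QuadraticForm K (Fin r → Fin 2 → K) :=
  QuadraticMap.pi fun i => binQF (a i) (b i)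

/-- The orthogonal sum of `m` hyperbolic planes `[0,0]`. -/
noncomputable def hypQF (K : Type) [CommRing K] (m : ℕ) :
    QuadraticForm K (Fin m → Fin 2 → K) :=
  binsQF (fun _ => 0) (fun _ => 0)

/-- The `(n+1)`-fold quadratic Pfister form `⟨⟨a₁,…,aₙ⟩⟩_b ⊗ [1,c]`, i.e. the orthogonal
sum over all subsets `S ⊆ {1,…,n}` of `(∏_{i∈S} aᵢ)·[1,c]`. -/
noncomputable def pfisterQF (n : ℕ) (a : Fin n → K) (c : K) :
    QuadraticForm K (Finset (Fin n) → Fin 2 → K) :=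
  QuadraticMap.pi fun S : Finset (Fin n) => (∏ i ∈ S, a i) • binQF 1 c

variable {V W : Type} [AddCommGroup V] [Module K V] [AddCommGroup W] [Module K W]

/-- `φ` has type `(r,s)`: it is isometric to `[a₁,b₁] ⊥ ⋯ ⊥ [a_r,b_r] ⊥ ⟨c₁,…,c_s⟩`. -/
def HasTypeRS (φ : QuadraticForm K V) (r s : ℕ) : Prop :=
  ∃ (a b : Fin r → K) (c : Fin s → K), φ.Equivalent ((binsQF a b).prod (diagQF c))

/-- `φ` is dominated by `ψ`. -/
def Dominated (φ : QuadraticForm K V) (ψ : QuadraticForm K W) : Prop :=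
  ∃ f : V →ₗ[K] W, Function.Injective f ∧ ∀ v, φ v = ψ (f v)

/-- `φ` is weakly dominated by `ψ`: `α·φ` is dominated by `ψ` for some unit `α`. -/
def WeaklyDominated (φ : QuadraticForm K V) (ψ : QuadraticForm K W) : Prop :=
  ∃ α : Kˣ, Dominated ((α : K) • φ) ψ

/-- Witt equivalence of quadratic forms. -/
def WittEquiv (Q₁ : QuadraticForm K V) (Q₂ : QuadraticForm K W) : Prop :=
  ∃ k l : ℕ, (Q₁.prod (hypQF K k)).Equivalent (Q₂.prod (hypQF K l))

/-- `φ` is a Pfister neighbour: there is a quadratic Pfister form `π` with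
`2·dim φ > dim π` and `φ ≺_w π`. -/
def IsPfisterNeighbour (φ : QuadraticForm K V) : Prop :=
  ∃ (n : ℕ) (a : Fin n → Kˣ) (c : K),
    2 * Module.finrank K V > 2 ^ (n + 1) ∧
      WeaklyDominated φ (pfisterQF n (fun i => (a i : K)) c)

/-- The Artin–Schreier set `℘(K) = {t² + t : t ∈ K}`. -/
def ArtinSchreier (K : Type) [CommRing K] : Set K := {x : K | ∃ t : K, x = t ^ 2 + t}

end Defs

section FunField

variable (F : Type) [Field F]

/-- The coefficient matrix of a quadratic form on `Fin n → F` with respect to the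
standard basis: diagonal entries `ψ(eᵢ)`, above-diagonal entries `b_ψ(eᵢ,eⱼ)`. -/
noncomputable def coeffMat {n : ℕ} (ψ : QuadraticForm F (Fin n → F)) :
    Matrix (Fin n) (Fin n) F :=
  Matrix.of fun i j =>
    if i = j then ψ (Pi.single i 1)
    else if i < j then polar ψ (Pi.single i 1) (Pi.single j 1) else 0

/-- The homogeneous degree 2 polynomial `P_ψ` associated to a quadratic form `ψ`. -/
noncomputable def qfPoly {n : ℕ} (ψ : QuadraticForm F (Fin n → F)) :
    MvPolynomial (Fin n) F :=
  ∑ i : Fin n, ∑ j : Fin n, MvPolynomial.C (coeffMat F ψ i j) * (X i * X j)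

/-- The affine coordinate ring `F[x₁,…,xₙ]/(P_ψ)` of the quadric `ψ = 0`. -/
def FunFieldRing {n : ℕ} (ψ : QuadraticForm F (Fin n → F)) : Type :=
  MvPolynomial (Fin n) F ⧸ Ideal.span {qfPoly F ψ}

noncomputable instance {n : ℕ} (ψ : QuadraticForm F (Fin n → F)) :
    CommRing (FunFieldRing F ψ) :=
  inferInstanceAs (CommRing (MvPolynomial (Fin n) F ⧸ Ideal.span {qfPoly F ψ}))

noncomputable instance {n : ℕ} (ψ : QuadraticForm F (Fin n → F)) :
    Algebra F (FunFieldRing F ψ) :=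
  inferInstanceAs (Algebra F (MvPolynomial (Fin n) F ⧸ Ideal.span {qfPoly F ψ}))

/-- The function field `F(ψ)` of the quadric `ψ = 0`. -/
def FunField {n : ℕ} (ψ : QuadraticForm F (Fin n → F)) : Type :=
  FractionRing (FunFieldRing F ψ)

noncomputable instance {n : ℕ} (ψ : QuadraticForm F (Fin n → F)) :
    CommRing (FunField F ψ) :=
  inferInstanceAs (CommRing (FractionRing (FunFieldRing F ψ)))

noncomputable instance {n : ℕ} (ψ : QuadraticForm F (Fin n → F)) :
    Algebra (FunFieldRing F ψ) (FunField F ψ) :=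
  inferInstanceAs (Algebra (FunFieldRing F ψ) (FractionRing (FunFieldRing F ψ)))

noncomputable instance {n : ℕ} (ψ : QuadraticForm F (Fin n → F)) :
    Algebra F (FunField F ψ) :=
  inferInstanceAs (Algebra F (FractionRing (FunFieldRing F ψ)))

/-- The canonical map `F → F(ψ)`. -/
noncomputable def funFieldMap {n : ℕ} (ψ : QuadraticForm F (Fin n → F)) :
    F →+* FunField F ψ :=
  algebraMap F (FunField F ψ)

/-- Scalar extension of a quadratic form on `Fin n → F` along a ring homomorphism
`f : F → K`. -/
noncomputable def extendQF {K : Type} [CommRing K] (f : F →+* K) {n : ℕ}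
    (φ : QuadraticForm F (Fin n → F)) : QuadraticForm K (Fin n → K) :=
  ((coeffMat F φ).map f).toQuadraticMap'

end FunField


section Quat

variable (K : Type) [CommRing K]

/-- Defining relations for the char-2 quaternion algebra `[a,b)`: generators `i,j` with
`i² + i = a`, `j² = b`, `j·i = i·j + j` (i.e. `j·i·j⁻¹ = i + 1`). -/
inductive QuatRel (a b : K) : FreeAlgebra K (Fin 2) → FreeAlgebra K (Fin 2) → Prop
  | i_sq : QuatRel a b (FreeAlgebra.ι K 0 * FreeAlgebra.ι K 0 + FreeAlgebra.ι K 0)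
      (algebraMap K _ a)
  | j_sq : QuatRel a b (FreeAlgebra.ι K 1 * FreeAlgebra.ι K 1) (algebraMap K _ b)
  | swap : QuatRel a b (FreeAlgebra.ι K 1 * FreeAlgebra.ι K 0)
      (FreeAlgebra.ι K 0 * FreeAlgebra.ι K 1 + FreeAlgebra.ι K 1)

/-- The quaternion algebra `[a,b)` over `K` (characteristic two convention). -/
def QuatAlg (a b : K) : Type := RingQuot (QuatRel K a b)

noncomputable instance (a b : K) : Ring (QuatAlg K a b) :=
  inferInstanceAs (Ring (RingQuot (QuatRel K a b)))
noncomputable instance (a b : K) : Algebra K (QuatAlg K a b) :=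
  inferInstanceAs (Algebra K (RingQuot (QuatRel K a b)))

/-- `[a,b)` is split over `K`: isomorphic to the `2×2` matrix algebra. -/
def QuatSplit (a b : K) : Prop :=
  Nonempty (QuatAlg K a b ≃ₐ[K] Matrix (Fin 2) (Fin 2) K)

end Quat

section Sqrt

variable (F : Type) [Field F]

/-- The field `F(√c₁,…,√c_s)` obtained by adjoining square roots of the `cᵢ`
(inside an algebraic closure of `F`). -/
noncomputable def sqrtExt {s : ℕ} (c : Fin s → F) :
    IntermediateField F (AlgebraicClosure F) :=
  IntermediateField.adjoin F
    {y : AlgebraicClosure F | ∃ i, y ^ 2 = algebraMap F (AlgebraicClosure F) (c i)}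

/-- The subfield `F² = {x² : x ∈ F}` of squares of a field of characteristic 2. -/
noncomputable def sqSubfield : Subfield F := Subfield.closure (Set.range fun x : F => x ^ 2)

set_option synthInstance.maxHeartbeats 1000000 in
/-- The norm degree `[F²(cᵢ·cⱼ) : F²]` of a diagonal form `⟨c₁,…,c_s⟩`. -/
noncomputable def normDegree {s : ℕ} (c : Fin s → F) : ℕ :=
  Module.finrank (sqSubfield F)
    (IntermediateField.adjoin (sqSubfield F)
      (Set.range fun p : Fin s × Fin s => c p.1 * c p.2))

end Sqrt

/-- A ring is a division algebra if it is nontrivial and every nonzero element is a unit. -/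
def IsDivisionAlgebra (T : Type) [Ring T] : Prop :=
  (0 : T) ≠ 1 ∧ ∀ x : T, x ≠ 0 → IsUnit x

/-!
Compose the isometry `φ ⊥ ⟨c⟩ ≅ ψ ⊥ ⟨c⟩` with the inclusion `⟨c⟩ ⊆ ρ`: this embeds `ψ ⊥ ⟨c⟩`
into the nonsingular form `φ ⊥ ρ`. The images `vᵢ` of the standard basis of `⟨c⟩` are
polar-orthogonal to each other and to the image of `ψ`. Nondegeneracy of the polar form gives
vectors `fᵢ` orthogonal to the image of `ψ` with `b(vₖ, fᵢ) = δₖᵢ`, and the triangular change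
`fᵢ ↦ fᵢ + ∑_{k > i} b(fᵢ, fₖ) vₖ` makes them pairwise orthogonal, because in characteristic 2
the Gram matrix of the `fᵢ` is alternating. The `vᵢ, fᵢ` then span `[c₁, q f₁] ⊥ ⋯ ⊥ [c_s, q f_s]`
orthogonally to `ψ`, and a dimension count gives `φ ⊥ ρ ≅ ψ ⊥ [c₁, q f₁] ⊥ ⋯ ⊥ [c_s, q f_s]`.
-/

namespace QuadraticMap

variable {F : Type} [Field F] {V V' W W' : Type} [AddCommGroup V] [Module F V]
  [AddCommGroup V'] [Module F V'] [AddCommGroup W] [Module F W] [AddCommGroup W'] [Module F W']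

lemma polar_sum_right (Q : QuadraticForm F V) {ι : Type} (t : Finset ι) (x : V) (y : ι → V) :
    polar Q x (∑ i ∈ t, y i) = ∑ i ∈ t, polar Q x (y i) := by
  simp only [← polarBilin_apply_apply, map_sum]

lemma polar_sum_left (Q : QuadraticForm F V) {ι : Type} (t : Finset ι) (x : ι → V) (y : V) :
    polar Q (∑ i ∈ t, x i) y = ∑ i ∈ t, polar Q (x i) y := by
  simp only [polar_comm Q _ y, polar_sum_right]

lemma map_sum_of_polar_eq_zero (Q : QuadraticForm F V) {ι : Type} [DecidableEq ι]
    (t : Finset ι) (x : ι → V) (hx : ∀ i j, i ≠ j → polar Q (x i) (x j) = 0) :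
    Q (∑ i ∈ t, x i) = ∑ i ∈ t, Q (x i) := by
  induction t using Finset.induction_on with
  | empty => simp
  | insert i t hi ih =>
    rw [Finset.sum_insert hi, Finset.sum_insert hi, QuadraticMap.map_add Q, ih, polar_sum_right,
      Finset.sum_eq_zero fun j hj => hx i j (ne_of_mem_of_not_mem hj hi).symm, add_zero]

lemma separatingLeft_polarBilin_prod {Q₁ : QuadraticForm F V} {Q₂ : QuadraticForm F W}
    (h₁ : (polarBilin Q₁).SeparatingLeft) (h₂ : (polarBilin Q₂).SeparatingLeft) :
    (polarBilin (Q₁.prod Q₂)).SeparatingLeft := by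
  rintro ⟨x₁, x₂⟩ hx
  refine Prod.ext (h₁ x₁ fun y => ?_) (h₂ x₂ fun y => ?_)
  · simpa using hx (y, 0)
  · simpa using hx (0, y)

lemma Isometry.polar_map_map {Q₁ : QuadraticForm F V} {Q₂ : QuadraticForm F W} (f : Q₁ →qᵢ Q₂)
    (x y : V) : polar Q₂ (f x) (f y) = polar Q₁ x y := by
  simp only [polar, ← map_add, f.map_app]

lemma Isometry.equivalent_of_injective [FiniteDimensional F V] [FiniteDimensional F W]
    {Q₁ : QuadraticForm F V} {Q₂ : QuadraticForm F W} (f : Q₁ →qᵢ Q₂)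
    (hf : Function.Injective f) (hdim : Module.finrank F V = Module.finrank F W) :
    Q₁.Equivalent Q₂ :=
  ⟨{ LinearEquiv.ofBijective f.toLinearMap
      ⟨hf, (LinearMap.injective_iff_surjective_of_finrank_eq_finrank hdim).mp hf⟩ with
    map_app' := f.map_app }⟩

lemma IsometryEquiv.separatingLeft_polarBilin {Q₁ : QuadraticForm F V} {Q₂ : QuadraticForm F W}
    (e : Q₁.IsometryEquiv Q₂) (h : (polarBilin Q₂).SeparatingLeft) :
    (polarBilin Q₁).SeparatingLeft := by
  intro x hx
  have hex : e x = 0 := h (e x) fun y => by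
    simpa [← e.toIsometry.polar_map_map] using hx (e.symm y)
  simpa using congrArg e.symm hex

lemma exists_polar_eq_of_injective [FiniteDimensional F V] {Q : QuadraticForm F V}
    (hQ : (polarBilin Q).SeparatingLeft) {N : Type} [AddCommGroup N] [Module F N]
    {T : N →ₗ[F] V} (hT : Function.Injective T) (ℓ : Module.Dual F N) :
    ∃ f : V, ∀ z, polar Q (T z) f = ℓ z := by
  obtain ⟨S, hS⟩ := T.exists_leftInverse_of_injective (LinearMap.ker_eq_bot.mpr hT)
  have hQnd : (polarBilin Q).Nondegenerate :=
    (LinearMap.IsRefl.nondegenerate_iff_separatingLeft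
      fun x y h => (polar_comm Q y x).trans h).mpr hQ
  refine ⟨(LinearMap.BilinForm.toDual (polarBilin Q) hQnd).symm (ℓ ∘ₗ S), fun z => ?_⟩
  rw [polar_comm, ← polarBilin_apply_apply, LinearMap.BilinForm.apply_toDual_symm_apply,
    LinearMap.comp_apply, ← LinearMap.comp_apply S T, hS, LinearMap.id_apply]

def Isometry.prodMap {Q₁ : QuadraticForm F V} {Q₂ : QuadraticForm F V'}
    {Q₃ : QuadraticForm F W} {Q₄ : QuadraticForm F W'} (f : Q₁ →qᵢ Q₂) (g : Q₃ →qᵢ Q₄) :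
    Q₁.prod Q₃ →qᵢ Q₂.prod Q₄ where
  toLinearMap := f.toLinearMap.prodMap g.toLinearMap
  map_app' z := by simp [f.map_app, g.map_app]

end QuadraticMap

section Forms

variable {K : Type} [CommRing K]

lemma binQF_apply (a b : K) (x : Fin 2 → K) :
    binQF a b x = a * x 0 * x 0 + x 0 * x 1 + b * x 1 * x 1 := by
  simp [binQF, Matrix.toQuadraticMap', Matrix.toQuadraticForm', Matrix.toLinearMap₂'_apply,
    Fin.sum_univ_two, LinearMap.BilinMap.toQuadraticMap_apply]
  ring

lemma diagQF_apply {s : ℕ} (c x : Fin s → K) : diagQF c x = ∑ i, c i * (x i * x i) := by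
  simp [diagQF, weightedSumSquares_apply]

def diagQFIsometryBinsQF {s : ℕ} (c d : Fin s → K) : diagQF c →qᵢ binsQF c d where
  toLinearMap := (LinearMap.single K (fun _ : Fin 2 => K) 0).compLeft (Fin s)
  map_app' x := by simp [binsQF, binQF_apply, diagQF_apply, mul_assoc]

lemma diagQFIsometryBinsQF_apply {s : ℕ} (c d x : Fin s → K) (i : Fin s) :
    diagQFIsometryBinsQF c d x i = Pi.single 0 (x i) :=
  rfl

lemma diagQFIsometryBinsQF_injective {s : ℕ} (c d : Fin s → K) :
    Function.Injective (diagQFIsometryBinsQF c d) := fun x y hxy =>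
  funext fun i => by simpa [diagQFIsometryBinsQF_apply] using congrFun (congrFun hxy i) 0

variable [CharP K 2]

lemma polar_binQF (a b : K) (x y : Fin 2 → K) :
    polar (binQF a b) x y = x 0 * y 1 + x 1 * y 0 := by
  simp only [polar, binQF_apply, Pi.add_apply]
  linear_combination (a * x 0 * y 0 + b * x 1 * y 1) * CharTwo.two_eq_zero (R := K)

lemma polar_diagQF {s : ℕ} (c x y : Fin s → K) : polar (diagQF c) x y = 0 := by
  simp only [polar, diagQF_apply, Pi.add_apply, ← Finset.sum_sub_distrib]
  refine Finset.sum_eq_zero fun i _ => ?_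
  linear_combination (c i * x i * y i) * CharTwo.two_eq_zero (R := K)

lemma separatingLeft_polarBilin_binsQF {r : ℕ} (a b : Fin r → K) :
    (polarBilin (binsQF a b)).SeparatingLeft := by
  intro x hx
  have hx' : ∀ y : Fin r → Fin 2 → K, ∑ i, (x i 0 * y i 1 + x i 1 * y i 0) = 0 := fun y => by
    simpa [binsQF, polar_binQF] using hx y
  funext i k
  fin_cases k
  · simpa [Pi.single_apply, ite_apply, mul_ite] using hx' (Pi.single i ![0, 1])
  · simpa [Pi.single_apply, ite_apply, mul_ite] using hx' (Pi.single i ![1, 0])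

end Forms

namespace QuadraticMap

variable {F : Type} [Field F] {V W : Type} [AddCommGroup V] [Module F V]
  [AddCommGroup W] [Module F W] {ι : Type} [Fintype ι] [DecidableEq ι]

structure IsSymplecticFamily (Q : QuadraticForm F V) (v f : ι → V) : Prop where
  polar_left_left : ∀ k l, polar Q (v k) (v l) = 0
  polar_right_right : ∀ k l, polar Q (f k) (f l) = 0
  polar_left_right : ∀ k l, polar Q (v k) (f l) = if k = l then 1 else 0

lemma exists_isSymplecticFamily [CharP F 2] [LinearOrder ι] {Q : QuadraticForm F V}
    {v f : ι → V} (hvv : ∀ k l, polar Q (v k) (v l) = 0)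
    (hvf : ∀ k l, polar Q (v k) (f l) = if k = l then 1 else 0) :
    ∃ f' : ι → V, IsSymplecticFamily Q v f' ∧
      ∀ x, (∀ k, polar Q x (v k) = 0) → ∀ i, polar Q x (f' i) = polar Q x (f i) := by
  set t : ι → ι → F := fun i k => if i < k then polar Q (f i) (f k) else 0
  have hfv : ∀ k l, polar Q (f l) (v k) = if k = l then 1 else 0 := fun k l => by
    rw [polar_comm, hvf]
  refine ⟨fun i => f i + ∑ k, t i k • v k, ⟨hvv, fun i j => ?_, fun k l => ?_⟩, fun x hx i => ?_⟩
  · simp only [polar_add_left, polar_add_right, polar_sum_left, polar_sum_right,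
      polar_smul_left, polar_smul_right, hvv, hfv, hvf, smul_eq_mul, mul_zero, mul_ite, mul_one,
      Finset.sum_const_zero, add_zero, Finset.sum_ite_eq', Finset.mem_univ, if_true, t]
    rcases lt_trichotomy i j with hij | rfl | hij
    · simp [hij, hij.not_gt, CharTwo.add_self_eq_zero]
    · simp [CharTwo.two_eq_zero]
    · simp [hij, hij.not_gt, polar_comm Q (f i), CharTwo.add_self_eq_zero]
  · simp [polar_add_right, polar_sum_right, polar_smul_right, hvv, hvf]
  · simp [polar_add_right, polar_sum_right, polar_smul_right, hx]

def pairSum (v f : ι → V) : (ι → Fin 2 → F) →ₗ[F] V :=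
  LinearMap.lsum F (fun _ => Fin 2 → F) F fun i => Fintype.linearCombination F ![v i, f i]

lemma pairSum_apply (v f : ι → V) (m : ι → Fin 2 → F) :
    pairSum v f m = ∑ i, (m i 0 • v i + m i 1 • f i) := by
  simp [pairSum, Fintype.linearCombination_apply, Fin.sum_univ_two]

lemma polar_pairSum_eq_zero {Q : QuadraticForm F V} {v f : ι → V} {x : V}
    (hv : ∀ k, polar Q x (v k) = 0) (hf : ∀ k, polar Q x (f k) = 0) (m : ι → Fin 2 → F) :
    polar Q x (pairSum v f m) = 0 := by
  simp [pairSum_apply, polar_sum_right, polar_add_right, polar_smul_right, hv, hf]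

namespace IsSymplecticFamily

variable {Q : QuadraticForm F V}

lemma polar_left_pairSum {v f : ι → V} (h : IsSymplecticFamily Q v f) (k : ι)
    (m : ι → Fin 2 → F) : polar Q (v k) (pairSum v f m) = m k 1 := by
  simp [pairSum_apply, polar_sum_right, polar_add_right, polar_smul_right, h.polar_left_left,
    h.polar_left_right]

lemma polar_right_pairSum {v f : ι → V} (h : IsSymplecticFamily Q v f) (k : ι)
    (m : ι → Fin 2 → F) : polar Q (f k) (pairSum v f m) = m k 0 := by
  rw [polar_comm]
  simp [pairSum_apply, polar_sum_left, polar_add_left, polar_smul_left, h.polar_right_right,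
    h.polar_left_right]

lemma map_pairSum {s : ℕ} {v f : Fin s → V} (h : IsSymplecticFamily Q v f)
    (m : Fin s → Fin 2 → F) :
    Q (pairSum v f m) = binsQF (fun i => Q (v i)) (fun i => Q (f i)) m := by
  have hpolar : ∀ i j, i ≠ j →
      polar Q (m i 0 • v i + m i 1 • f i) (m j 0 • v j + m j 1 • f j) = 0 := fun i j hij => by
    simp [polar_add_left, polar_add_right, polar_smul_left, polar_smul_right, h.polar_left_left,
      h.polar_right_right, h.polar_left_right, polar_comm Q (f i), hij, Ne.symm hij]
  rw [pairSum_apply, map_sum_of_polar_eq_zero Q _ _ hpolar, binsQF, pi_apply]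
  refine Finset.sum_congr rfl fun i _ => ?_
  rw [QuadraticMap.map_add Q, QuadraticMap.map_smul, QuadraticMap.map_smul, polar_smul_left,
    polar_smul_right, h.polar_left_right, if_pos rfl, binQF_apply]
  simp only [smul_eq_mul]
  ring

theorem exists_injective_isometry_prod_binsQF {s : ℕ} {v f : Fin s → V}
    (h : IsSymplecticFamily Q v f) {ψ : QuadraticForm F W} (j : ψ →qᵢ Q)
    (hj : Function.Injective j) (hjv : ∀ w k, polar Q (j w) (v k) = 0)
    (hjf : ∀ w k, polar Q (j w) (f k) = 0) :
    ∃ L : (ψ.prod (binsQF (fun i => Q (v i)) (fun i => Q (f i)))) →qᵢ Q,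
      Function.Injective L := by
  let L : W × (Fin s → Fin 2 → F) →ₗ[F] V := j.toLinearMap.coprod (pairSum v f)
  have hL : ∀ w m, L (w, m) = j w + pairSum v f m := fun _ _ => rfl
  refine ⟨⟨L, ?_⟩, ?_⟩
  · rintro ⟨w, m⟩
    change Q (L (w, m)) = _
    rw [hL, QuadraticMap.map_add Q, j.map_app, h.map_pairSum,
      polar_pairSum_eq_zero (hjv w) (hjf w), add_zero, prod_apply]
  · change Function.Injective L
    rw [← LinearMap.ker_eq_bot, LinearMap.ker_eq_bot']
    rintro ⟨w, m⟩ hwm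
    have hm : m = 0 := by
      funext k i
      fin_cases i
      · simpa [hL, polar_add_right, polar_comm Q (f k) (j w), hjf, h.polar_right_pairSum]
          using congrArg (polar Q (f k)) hwm
      · simpa [hL, polar_add_right, polar_comm Q (v k) (j w), hjv, h.polar_left_pairSum]
          using congrArg (polar Q (v k)) hwm
    subst hm
    have hw : j w = 0 := by simpa [hL] using hwm
    simp [hj (hw.trans j.toLinearMap.map_zero.symm)]

end IsSymplecticFamily

theorem exists_equivalent_prod_binsQF_of_isometry [CharP F 2] [FiniteDimensional F V]
    {Q : QuadraticForm F V} (hQ : (polarBilin Q).SeparatingLeft) {ψ : QuadraticForm F W}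
    {s : ℕ} {c : Fin s → F} (T : ψ.prod (diagQF c) →qᵢ Q) (hT : Function.Injective T)
    (hdim : Module.finrank F W + 2 * s = Module.finrank F V) :
    ∃ d : Fin s → F, (ψ.prod (binsQF c d)).Equivalent Q := by
  have : FiniteDimensional F (W × (Fin s → F)) := Module.Finite.of_injective T.toLinearMap hT
  have : FiniteDimensional F W :=
    Module.Finite.of_injective (LinearMap.inl F W (Fin s → F)) LinearMap.inl_injective
  have hpolarT : ∀ z z', polar Q (T z) (T z') = polar ψ z.1 z'.1 := fun z z' => by
    rw [T.polar_map_map, polar_prod, polar_diagQF, add_zero]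
  let j : ψ →qᵢ Q := T.comp (Isometry.inl ψ (diagQF c))
  let v : Fin s → V := fun i => T (0, Pi.single i 1)
  have hQv : (fun i => Q (v i)) = c := funext fun i => by
    simp [v, T.map_app, diagQF_apply, Pi.single_apply]
  choose f hf using fun i =>
    exists_polar_eq_of_injective hQ hT (LinearMap.proj i ∘ₗ LinearMap.snd F W (Fin s → F))
  replace hf : ∀ i z, polar Q (T z) (f i) = z.2 i := hf
  have hvf : ∀ k l, polar Q (v k) (f l) = if k = l then 1 else 0 := fun k l => by
    simp [v, hf, Pi.single_apply, eq_comm]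
  obtain ⟨f', hsymp, hf'⟩ := exists_isSymplecticFamily (fun k l => by simp [v, hpolarT]) hvf
  have hjv : ∀ w k, polar Q (j w) (v k) = 0 := fun w k => by simp [j, v, hpolarT]
  have hjf : ∀ w k, polar Q (j w) (f' k) = 0 := fun w k => by
    rw [hf' _ (hjv w)]
    simp [j, hf]
  obtain ⟨L, hL⟩ := hsymp.exists_injective_isometry_prod_binsQF j
    (hT.comp LinearMap.inl_injective) hjv hjf
  refine ⟨fun i => Q (f' i), hQv ▸ L.equivalent_of_injective hL ?_⟩
  simp [Module.finrank_prod, Module.finrank_pi_fintype, ← hdim, mul_comm]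

end QuadraticMap

theorem stmt14_general (F : Type) [Field F] [CharP F 2]
    {V W : Type} [AddCommGroup V] [Module F V] [AddCommGroup W] [Module F W]
    (φ : QuadraticForm F V) (ψ : QuadraticForm F W)
    (hφns : ∃ (r : ℕ) (a b : Fin r → F), φ.Equivalent (binsQF a b))
    (s : ℕ) (c : Fin s → F)
    (h : (φ.prod (diagQF c)).Equivalent (ψ.prod (diagQF c)))
    (d : Fin s → F) :
    ∃ d' : Fin s → F, (φ.prod (binsQF c d)).Equivalent (ψ.prod (binsQF c d')) := by
  obtain ⟨r, a, b, ⟨eφ⟩⟩ := hφns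
  obtain ⟨g⟩ := h
  have : FiniteDimensional F V := Module.Finite.equiv eφ.toLinearEquiv.symm
  have : FiniteDimensional F (W × (Fin s → F)) := Module.Finite.equiv g.toLinearEquiv
  have : FiniteDimensional F W := Module.Finite.of_surjective (LinearMap.fst F W (Fin s → F))
    Prod.fst_surjective
  have hQ : (polarBilin (φ.prod (binsQF c d))).SeparatingLeft :=
    separatingLeft_polarBilin_prod
      (eφ.separatingLeft_polarBilin (separatingLeft_polarBilin_binsQF a b))
      (separatingLeft_polarBilin_binsQF c d)
  let T := ((Isometry.id φ).prodMap (diagQFIsometryBinsQF c d)).comp g.symm.toIsometry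
  have hT : Function.Injective T :=
    (Function.injective_id.prodMap (diagQFIsometryBinsQF_injective c d)).comp g.symm.injective
  have hdim : Module.finrank F V = Module.finrank F W := by
    simpa [Module.finrank_prod] using g.toLinearEquiv.finrank_eq
  obtain ⟨d', hd'⟩ := exists_equivalent_prod_binsQF_of_isometry hQ T hT (by
    simp [Module.finrank_prod, Module.finrank_pi_fintype, hdim, mul_comm])
  exact ⟨d', hd'.symm⟩

theorem stmt14 (F : Type) [Field F] [CharP F 2]
    {V W : Type} [AddCommGroup V] [Module F V] [AddCommGroup W] [Module F W]
    (φ : QuadraticForm F V) (ψ : QuadraticForm F W)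
    (hφns : ∃ (r : ℕ) (a b : Fin r → F), φ.Equivalent (binsQF a b))
    (hψns : ∃ (r : ℕ) (a b : Fin r → F), ψ.Equivalent (binsQF a b))
    (s : ℕ) (c : Fin s → F)
    (h : (φ.prod (diagQF c)).Equivalent (ψ.prod (diagQF c)))
    (d : Fin s → F) :
    ∃ d' : Fin s → F, (φ.prod (binsQF c d)).Equivalent (ψ.prod (binsQF c d')) :=
  stmt14_general F φ ψ hφns s c h d
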